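/- Let S be a possibly infinite linear combination of resource terms with nonnegative rational coefficients, and let s̄ be a resource monomial in the support of S^!. If (s₁,…,sₙ) is any enumeration of the multiset s̄, then the coefficient of s̄ in S^! equals S^{s̄} / Card(St((s₁,…,sₙ))), where S^{s̄} = Π_{i=1}^n S_{sᵢ} and St((s₁,…,sₙ)) = {σ ∈ S_n | (s_{σ⁻¹(1)},…,s_{σ⁻¹(n)}) = (s₁,…,sₙ)} is the stabilizer of the tuple under the permutation action. -/

import Mathlib

set_option maxHeartbeats 1000000

/-! ### Rigid resource terms -/

/-- Rigid resource terms (de Bruijn indices for variables):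
`a ::= x | λ.a | ⟨a⟩b⃗ | a⊕• | •⊕a` where argument lists are ordered. -/
inductive Rt : Type
  | var : ℕ → Rt
  | lam : Rt → Rt
  | app : Rt → List Rt → Rt
  | inl : Rt → Rt
  | inr : Rt → Rt
deriving Inhabited

/-- Rigid resource expressions: terms or (rigid) monomials. -/
abbrev REx : Type := Rt ⊕ List Rt

/-! ### Isomorphism of rigid expressions -/

mutual
  /-- Two rigid terms are isomorphic (`≅`) when they differ only by
  permutations of argument lists. -/
  inductive IsoT : Rt → Rt → Prop
    | var (x : ℕ) : IsoT (.var x) (.var x)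
    | lam {a a'} : IsoT a a' → IsoT (.lam a) (.lam a')
    | inl {a a'} : IsoT a a' → IsoT (.inl a) (.inl a')
    | inr {a a'} : IsoT a a' → IsoT (.inr a) (.inr a')
    | app {c c' : Rt} {ds ds' : List Rt} :
        IsoT c c' → IsoM ds ds' → IsoT (.app c ds) (.app c' ds')
  /-- Isomorphism of rigid monomials: a permutation `σ` together with
  isomorphisms `aᵢ ≅ a'_{σ(i)}`. -/
  inductive IsoM : List Rt → List Rt → Prop
    | mk (as as' : List Rt) (h : as'.length = as.length) (σ : Equiv.Perm (Fin as.length))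
        (H : ∀ i : Fin as.length, IsoT (as.get i) (as'.get ((σ i).cast h.symm))) :
        IsoM as as'
end

/-! ### Resource expressions as quotients of rigid expressions -/

/-- Resource terms: rigid terms up to permutations of arguments, i.e. terms
whose argument lists are multisets. -/
def ResTerm : Type := Quot IsoT

instance : Inhabited ResTerm := ⟨Quot.mk _ (.var 0)⟩

/-- The resource term represented by a rigid term (`r ◁ |r|`). -/
def rmk : Rt → ResTerm := Quot.mk IsoT

/-- A choice of rigid representation of a resource term. -/
noncomputable def rout : ResTerm → Rt := Quot.out

/-- The resource monomial (multiset) represented by a rigid monomial (list). -/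
def toMul (bs : List Rt) : Multiset ResTerm := ↑(bs.map rmk)

/-- Resource expressions: terms or monomials (finite multisets of terms). -/
abbrev ResExpr : Type := ResTerm ⊕ Multiset ResTerm

/-- The resource expression represented by a rigid expression. -/
def toQ : REx → ResExpr := Sum.map rmk toMul

/-- A choice of rigid representation of a resource expression. -/
noncomputable def outE : ResExpr → REx :=
  Sum.map rout (fun m => m.toList.map rout)

/-- Variable as a resource term. -/
def qVar (x : ℕ) : ResTerm := rmk (.var x)

/-- Abstraction on resource terms. -/
noncomputable def qLam (s : ResTerm) : ResTerm := rmk (.lam (rout s))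

/-- Left injection `(-) ⊕ •` on resource terms. -/
noncomputable def qInl (s : ResTerm) : ResTerm := rmk (.inl (rout s))

/-- Right injection `• ⊕ (-)` on resource terms. -/
noncomputable def qInr (s : ResTerm) : ResTerm := rmk (.inr (rout s))

/-- Application `⟨s⟩t̄` of a resource term to a resource monomial. -/
noncomputable def qApp (s : ResTerm) (t : Multiset ResTerm) : ResTerm :=
  rmk (.app (rout s) (t.toList.map rout))

/-! ### Occurrence counting and rigid substitution -/

namespace Rt

/-- Shift free de Bruijn indices `≥ c` up by one in a rigid term. -/
def shiftR (c : ℕ) : Rt → Rt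
  | .var n => .var (if n < c then n else n + 1)
  | .lam a => .lam (a.shiftR (c + 1))
  | .inl a => .inl (a.shiftR c)
  | .inr a => .inr (a.shiftR c)
  | .app d es => .app (d.shiftR c) (es.attach.map fun e => e.1.shiftR c)
termination_by r => sizeOf r
decreasing_by
  all_goals simp_wf
  all_goals try omega
  all_goals (have := List.sizeOf_lt_of_mem e.2; omega)

end Rt

/-- Number of free occurrences `n_x(a)` of the variable `x` in a rigid term. -/
def nx (x : ℕ) : Rt → ℕ
  | .var n => if n = x then 1 else 0
  | .lam a => nx (x + 1) a
  | .inl a => nx x a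
  | .inr a => nx x a
  | .app d es => nx x d + (es.attach.map fun e => nx x e.1).sum
termination_by r => sizeOf r
decreasing_by
  all_goals simp_wf
  all_goals try omega
  all_goals (have := List.sizeOf_lt_of_mem e.2; omega)

/-- Number of free occurrences of `x` in a rigid monomial. -/
def nxL (x : ℕ) (l : List Rt) : ℕ := (l.map (nx x)).sum

/-- Number of free occurrences of `x` in a rigid expression. -/
def nxE (x : ℕ) : REx → ℕ := Sum.elim (nx x) (nxL x)

mutual
  /-- Rigid substitution `r[b⃗/x]`: the occurrences of `x` in `r`, taken from
  left to right, are replaced by the successive elements of `b⃗`; it is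
  undefined (`none`, i.e. the partial rigid expression `0`) unless `n_x(r) = |b⃗|`. -/
  def rsubst : Rt → ℕ → List Rt → Option Rt
    | .var n, x, bs =>
        if n = x then (match bs with | [b] => some b | _ => none)
        else (match bs with
              | [] => some (.var (if x < n then n - 1 else n))
              | _ => none)
    | .lam a, x, bs => (rsubst a (x + 1) (bs.map (Rt.shiftR 0))).map .lam
    | .inl a, x, bs => (rsubst a x bs).map .inl
    | .inr a, x, bs => (rsubst a x bs).map .inr
    | .app c ds, x, bs =>
        match rsubst c x (bs.take (nx x c)), rsubstL ds x (bs.drop (nx x c)) with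
        | some c', some ds' => some (.app c' ds')
        | _, _ => none
  /-- Rigid substitution in a rigid monomial. -/
  def rsubstL : List Rt → ℕ → List Rt → Option (List Rt)
    | [], _, bs => (match bs with | [] => some [] | _ => none)
    | a :: as, x, bs =>
        match rsubst a x (bs.take (nx x a)), rsubstL as x (bs.drop (nx x a)) with
        | some a', some as' => some (a' :: as')
        | _, _ => none
end

/-- Rigid substitution on rigid expressions. -/
def rsubstE : REx → ℕ → List Rt → Option REx
  | .inl r, x, bs => (rsubst r x bs).map .inl
  | .inr l, x, bs => (rsubstL l x bs).map .inr

/-- Left action of a permutation on a list: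
`σ·(b₁,…,bₙ) = (b_{σ⁻¹(1)},…,b_{σ⁻¹(n)})` (identity if the length is not `n`). -/
def permList {α : Type*} {n : ℕ} (σ : Equiv.Perm (Fin n)) (l : List α) : List α :=
  if h : l.length = n then List.ofFn (fun j : Fin n => l.get ((σ.symm j).cast h.symm))
  else l

/-! ### Promotion -/

/-- Promotion `S^! = ∑_{n≥0} (1/n!) Sⁿ` of a vector of resource terms, where
`Sⁿ = [S,…,S]` (`n` copies) is the sum over all `n`-tuples; its coefficient on
a multiset `m` of cardinality `n` is `(1/n!) · #{enumerations of m} · ∏_{t ∈ m} S t`. -/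
noncomputable def prom (S : ResTerm → ℚ≥0) (m : Multiset ResTerm) : ℚ≥0 :=
  (Nat.card {l : List ResTerm // (↑l : Multiset ResTerm) = m} : ℚ≥0) /
      (Nat.factorial (Multiset.card m)) * (m.map S).prod

/-! The symmetric group on `Fin n` acts on lists of length `n` by `permList`. The orbit of an
enumeration `l` of `m` is the set of all enumerations of `m`, and its stabilizer is `St(l)`, so
orbit–stabilizer gives `#{enumerations of m} · #St(l) = n!`. Hence the factor
`#{enumerations of m} / n!` in the coefficient of `m` in `S^!` is `1 / #St(l)`. -/

section PermList

variable {α : Type*} {n : ℕ}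

lemma permList_of_length_eq (σ : Equiv.Perm (Fin n)) {l : List α} (h : l.length = n) :
    permList σ l = List.ofFn (fun j : Fin n => l.get ((σ.symm j).cast h.symm)) :=
  dif_pos h

lemma permList_of_length_ne (σ : Equiv.Perm (Fin n)) {l : List α} (h : l.length ≠ n) :
    permList σ l = l :=
  dif_neg h

lemma length_permList (σ : Equiv.Perm (Fin n)) (l : List α) :
    (permList σ l).length = l.length := by
  by_cases h : l.length = n
  · simp [permList_of_length_eq σ h, h]
  · rw [permList_of_length_ne σ h]

lemma permList_one (l : List α) : permList (1 : Equiv.Perm (Fin n)) l = l := by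
  by_cases h : l.length = n
  · rw [permList_of_length_eq _ h]
    apply List.ext_get (by simp [h])
    simp [Equiv.Perm.one_def]
  · exact permList_of_length_ne _ h

lemma permList_mul (σ τ : Equiv.Perm (Fin n)) (l : List α) :
    permList (σ * τ) l = permList σ (permList τ l) := by
  by_cases h : l.length = n
  · have hτ : (permList τ l).length = n := (length_permList τ l).trans h
    apply List.ext_getElem (by rw [length_permList, length_permList, length_permList])
    intro i _ _
    simp only [permList_of_length_eq σ hτ]
    simp [permList_of_length_eq _ h, Equiv.Perm.mul_def]
  · have hτ : (permList τ l).length ≠ n := (length_permList τ l).trans_ne h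
    rw [permList_of_length_ne _ h, permList_of_length_ne σ hτ, permList_of_length_ne τ h]

instance List.permListMulAction : MulAction (Equiv.Perm (Fin n)) (List α) where
  smul := permList
  one_smul := permList_one
  mul_smul := permList_mul

lemma coe_permList (σ : Equiv.Perm (Fin n)) (l : List α) :
    (permList σ l : Multiset α) = l := by
  by_cases h : l.length = n
  · subst h
    rw [permList_of_length_eq σ rfl, Multiset.coe_eq_coe]
    have := Equiv.Perm.ofFn_comp_perm σ.symm l.get
    rwa [List.ofFn_get] at this
  · rw [permList_of_length_ne σ h]

lemma exists_perm_eq_comp_of_perm_ofFn {f g : Fin n → α} (h : (List.ofFn f).Perm (List.ofFn g)) :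
    ∃ σ : Equiv.Perm (Fin n), g = f ∘ σ := by
  let : LinearOrder α := IsWellOrder.linearOrder WellOrderingRel
  -- Sorted along an arbitrary linear order on `α`, both tuples become the same monotone tuple.
  have sorted_eq : f ∘ Tuple.sort f = g ∘ Tuple.sort g := by
    apply List.ofFn_injective
    apply List.Perm.eq_of_sortedLE (Tuple.monotone_sort f).sortedLE_ofFn
      (Tuple.monotone_sort g).sortedLE_ofFn
    exact ((Tuple.sort f).ofFn_comp_perm f).trans
      (h.trans ((Tuple.sort g).ofFn_comp_perm g).symm)
  refine ⟨(Tuple.sort g).symm.trans (Tuple.sort f), funext fun x => ?_⟩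
  simpa using (congrFun sorted_eq ((Tuple.sort g).symm x)).symm

lemma exists_permList_eq_of_perm {l l' : List α} (h : l'.Perm l) :
    ∃ σ : Equiv.Perm (Fin l.length), permList σ l = l' := by
  have hlen : l'.length = l.length := h.length_eq
  have hl' : List.ofFn (fun i : Fin l.length => l'.get (i.cast hlen.symm)) = l' :=
    List.ext_get (by simp [hlen]) fun i _ _ => by simp
  obtain ⟨σ, hσ⟩ := exists_perm_eq_comp_of_perm_ofFn (f := l.get)
    (g := fun i : Fin l.length => l'.get (i.cast hlen.symm))
    (by rw [List.ofFn_get, hl']; exact h.symm)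
  refine ⟨σ.symm, ?_⟩
  rw [permList_of_length_eq _ rfl, ← hl', hσ]
  rfl

lemma mem_orbit_permList_iff_coe_eq (l l' : List α) :
    l' ∈ MulAction.orbit (Equiv.Perm (Fin l.length)) l ↔ (l' : Multiset α) = l := by
  constructor
  · rintro ⟨σ, rfl⟩
    exact coe_permList σ l
  · intro h
    exact exists_permList_eq_of_perm (Multiset.coe_eq_coe.mp h)

theorem card_coe_eq_mul_card_permList_stabilizer (l : List α) :
    Nat.card {l' : List α // (l' : Multiset α) = l} *
      Nat.card {σ : Equiv.Perm (Fin l.length) // permList σ l = l} = l.length.factorial := by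
  have orbit_equiv : {l' : List α // (l' : Multiset α) = l} ≃
      MulAction.orbit (Equiv.Perm (Fin l.length)) l :=
    Equiv.subtypeEquivRight fun l' => (mem_orbit_permList_iff_coe_eq l l').symm
  have stabilizer_equiv : {σ : Equiv.Perm (Fin l.length) // permList σ l = l} ≃
      MulAction.stabilizer (Equiv.Perm (Fin l.length)) l :=
    Equiv.subtypeEquivRight fun σ => by rw [MulAction.mem_stabilizer_iff]; rfl
  rw [Nat.card_congr orbit_equiv, Nat.card_congr stabilizer_equiv, ← Nat.card_prod,
    Nat.card_congr (MulAction.orbitProdStabilizerEquivGroup _ l), Nat.card_perm, Nat.card_fin]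

end PermList

theorem coeff_promotion (S : ResTerm → ℚ≥0) (m : Multiset ResTerm)
    (hm : prom S m ≠ 0) (l : List ResTerm) (hl : (↑l : Multiset ResTerm) = m) :
    prom S m = (∏ i : Fin l.length, S (l.get i)) /
      (Nat.card {σ : Equiv.Perm (Fin l.length) // permList σ l = l} : ℚ≥0) := by
  subst hl
  set N := Nat.card {l' : List ResTerm // (l' : Multiset ResTerm) = l}
  set K := Nat.card {σ : Equiv.Perm (Fin l.length) // permList σ l = l}
  have orbit_stabilizer : N * K = l.length.factorial :=
    card_coe_eq_mul_card_permList_stabilizer l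
  have hN : (N : ℚ≥0) ≠ 0 := by
    exact_mod_cast left_ne_zero_of_mul (orbit_stabilizer ▸ l.length.factorial_ne_zero)
  have hfact : (l.length.factorial : ℚ≥0) = N * K := by
    exact_mod_cast orbit_stabilizer.symm
  rw [prom, Multiset.coe_card, hfact, div_mul_cancel_left₀ hN, Multiset.map_coe,
    Multiset.prod_coe, ← Fin.prod_univ_fun_getElem, inv_mul_eq_div]
  rfl
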